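/- In the long-tailed mixture distribution μ on ℝ (half the mass on A head intervals, half on B tail intervals as above), with uniform label noise at rate η applied to all m samples: if m ≥ (16A/(ρη))·log(A/(ρδ)), then with probability at least 1 − δ, every classifier interpolating the noisy dataset has adversarial risk R_{Adv,ρ}(f, μ) ≥ 1/8. -/

import Mathlib

open MeasureTheory Metric Set
open scoped ENNReal NNReal

/-- The uniform probability distribution on the interval `(a, b)`. -/
noncomputable def unifIoo (a b : ℝ) : Measure ℝ :=
  (ENNReal.ofReal (b - a))⁻¹ • volume.restrict (Set.Ioo a b)

/-- The long-tailed mixture: half the mass spread over `A` head intervals `(i, i+1/2)` and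
half over `B` tail intervals `(A+j, A+j+1/2)`. -/
noncomputable def longTailed (A B : ℕ) : Measure ℝ :=
  (2 * A : ℝ≥0∞)⁻¹ • ∑ i ∈ Finset.Icc 1 A, unifIoo (i : ℝ) (i + 1 / 2)
    + (2 * B : ℝ≥0∞)⁻¹ • ∑ j ∈ Finset.Icc 1 B, unifIoo ((A : ℝ) + j) ((A : ℝ) + j + 1 / 2)

lemma unifIoo_apply (a b : ℝ) (s : Set ℝ) :
    unifIoo a b s = (ENNReal.ofReal (b - a))⁻¹ * volume (s ∩ Set.Ioo a b) := by
  rw [unifIoo, Measure.smul_apply, Measure.restrict_apply' measurableSet_Ioo, smul_eq_mul]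

lemma unifIoo_half (c : ℝ) (s : Set ℝ) (hs : Set.Ioo c (c + 1/2) ⊆ s) :
    unifIoo c (c + 1/2) s = 1 := by
  rw [unifIoo_apply, Set.inter_eq_right.2 hs, Real.volume_Ioo]
  have : c + 1/2 - c = 1/2 := by ring
  rw [this, ENNReal.inv_mul_cancel (by norm_num) (by norm_num)]

lemma aux_half (n : ℕ) (hn : n ≠ 0) : (2 * n : ℝ≥0∞)⁻¹ * (n : ℝ≥0∞) = 2⁻¹ := by
  rw [ENNReal.mul_inv (Or.inl two_ne_zero) (Or.inl ENNReal.ofNat_ne_top), mul_assoc,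
    ENNReal.inv_mul_cancel (by exact_mod_cast hn) (ENNReal.natCast_ne_top n), mul_one]

lemma longTailed_prob (A B : ℕ) (hA : A ≠ 0) (hB : B ≠ 0) :
    IsProbabilityMeasure (longTailed A B) := by
  constructor
  rw [longTailed, Measure.add_apply, Measure.smul_apply, Measure.smul_apply,
    Measure.finset_sum_apply, Measure.finset_sum_apply]
  have h1 : ∀ i ∈ Finset.Icc 1 A, unifIoo (i : ℝ) (i + 1/2) Set.univ = 1 := fun i _ =>
    unifIoo_half _ _ (Set.subset_univ _)
  have h2 : ∀ j ∈ Finset.Icc 1 B, unifIoo ((A : ℝ) + j) ((A : ℝ) + j + 1/2) Set.univ = 1 :=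
    fun j _ => unifIoo_half _ _ (Set.subset_univ _)
  rw [Finset.sum_congr rfl h1, Finset.sum_congr rfl h2]
  simp only [Finset.sum_const, Nat.card_Icc, Nat.add_sub_cancel, nsmul_eq_mul, mul_one, smul_eq_mul]
  rw [aux_half A hA, aux_half B hB]
  rw [ENNReal.inv_two_add_inv_two]

/-- lower bound via head intervals -/
lemma longTailed_head (A B : ℕ) (hA : A ≠ 0) (U : Set ℝ)
    (hU : ∀ i ∈ Finset.Icc 1 A, Set.Ioo (i : ℝ) (i + 1/2) ⊆ U) :
    (1/8 : ℝ≥0∞) ≤ longTailed A B U := by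
  rw [longTailed, Measure.add_apply]
  refine le_trans ?_ le_self_add
  rw [Measure.smul_apply, Measure.finset_sum_apply, smul_eq_mul]
  have h1 : ∀ i ∈ Finset.Icc 1 A, unifIoo (i : ℝ) (i + 1/2) U = 1 := fun i hi =>
    unifIoo_half _ _ (hU i hi)
  rw [Finset.sum_congr rfl h1]
  simp only [Finset.sum_const, Nat.card_Icc, Nat.add_sub_cancel, nsmul_eq_mul, mul_one, smul_eq_mul]
  rw [aux_half A hA]
  norm_num


lemma numeric_bound (A k : ℕ) (m : ℕ) (ρ δ η L : ℝ)
    (hA : (1:ℝ) ≤ A) (hρ0 : 0 < ρ) (hρ2 : ρ < 1/2) (hδ0 : 0 < δ) (hδ2 : δ < 1/2)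
    (hη0 : 0 < η) (hL0 : 0 < L) (hLρ : ρ/2 ≤ L) (hk : (k:ℝ) ≤ 1/ρ)
    (hm : 16 * A / (ρ * η) * Real.log (A / (ρ * δ)) ≤ m) :
    (A:ℝ) * k * Real.exp (-(m * (η * L / A))) ≤ δ := by
  have hA0 : (0:ℝ) < A := by linarith
  set s := (A:ℝ) / (ρ * δ) with hs
  have hs1 : 1 ≤ s := by
    rw [hs, le_div_iff₀ (by positivity)]
    nlinarith
  have hlog : 0 ≤ Real.log s := Real.log_nonneg hs1
  have hmq : 8 * Real.log s ≤ m * (η * L / A) := by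
    have h2 : (16 * A / (ρ * η) * Real.log s) * (η * L / A) ≤ m * (η * L / A) :=
      mul_le_mul_of_nonneg_right hm (by positivity)
    have h3 : (16 * A / (ρ * η) * Real.log s) * (η * L / A) = 16 * (L / ρ) * Real.log s := by
      field_simp
    have h4 : (8:ℝ) ≤ 16 * (L / ρ) := by
      have h5 : (1:ℝ)/2 ≤ L / ρ := by
        rw [le_div_iff₀ hρ0]
        linarith
      linarith
    nlinarith [mul_le_mul_of_nonneg_right h4 hlog]
  have hexp : Real.exp (-(m * (η * L / A))) ≤ (s ^ 8)⁻¹ := by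
    have h1 : Real.exp (-(m * (η * L / A))) ≤ Real.exp (-(8 * Real.log s)) :=
      Real.exp_le_exp.2 (by linarith)
    have h2 : Real.exp (-(8 * Real.log s)) = (s ^ 8)⁻¹ := by
      rw [Real.exp_neg]
      congr 1
      rw [show (8:ℝ) * Real.log s = ((8:ℕ):ℝ) * Real.log s by norm_num,
        Real.exp_nat_mul, Real.exp_log (by linarith)]
    linarith [h2 ▸ h1]
  have hAk : (A:ℝ) * k ≤ s * δ := by
    have h1 : s * δ = A / ρ := by
      rw [hs]
      field_simp
    rw [h1]
    calc (A:ℝ) * k ≤ A * (1/ρ) := by gcongr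
    _ = A / ρ := by ring
  have hs8 : s ≤ s ^ 8 := le_self_pow₀ (by linarith) (by norm_num)
  have hsp : (0:ℝ) < s ^ 8 := by positivity
  calc (A:ℝ) * k * Real.exp (-(m * (η * L / A))) ≤ (s * δ) * (s ^ 8)⁻¹ := by
        apply mul_le_mul hAk hexp (Real.exp_nonneg _) (by positivity)
  _ ≤ δ := by
        rw [mul_inv_le_iff₀ hsp]
        nlinarith

set_option maxHeartbeats 1000000 in
/-- **Uniform noise on the long-tailed distribution is harmful.** With ground truth `0`
everywhere and each of the `m` labels flipped independently with probability `η`: if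
`m ≥ (16A/(ρη))·log(A/(ρδ))`, then with probability at least `1 − δ`, every classifier
interpolating the noisy dataset has adversarial risk at least `1/8`. -/
theorem uniform_noise_longTailed (A B : ℕ) (hA : 0 < A) (hAB : A < B)
    (η : ℝ) (hη0 : 0 < η) (hη1 : ENNReal.ofReal η ≤ 1)
    (ρ δ : ℝ) (hρ : ρ ∈ Set.Ioo (0 : ℝ) (1 / 2)) (hδ : δ ∈ Set.Ioo (0 : ℝ) (1 / 2))
    (m : ℕ) (hm : (16 * A / (ρ * η)) * Real.log (A / (ρ * δ)) ≤ m) :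
    1 - ENNReal.ofReal δ ≤
      (Measure.pi (fun _ : Fin m =>
          (longTailed A B).prod ((PMF.bernoulli (Real.toNNReal η) (ENNReal.coe_le_one_iff.mp hη1)).toMeasure)))
        {ω : Fin m → ℝ × Bool |
          ∀ f : ℝ → Bool,
            (∀ i : Fin m, f (ω i).1 = (ω i).2) →
            (1 / 8 : ℝ≥0∞) ≤ longTailed A B {x | ∃ z, dist z x ≤ ρ ∧ f z ≠ false}} := by
  obtain ⟨hρ0, hρ2⟩ := hρ
  obtain ⟨hδ0, hδ2⟩ := hδ
  have hA0 : (0:ℝ) < A := by exact_mod_cast hA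
  have hη1' : η ≤ 1 := by
    by_contra h
    push_neg at h
    have := (ENNReal.one_lt_ofReal.2 h).not_ge hη1
    exact this
  -- the grid
  set k : ℕ := ⌈(2*ρ)⁻¹⌉₊ with hkdef
  have hk0 : 0 < k := Nat.ceil_pos.2 (by positivity)
  have hk0' : (0:ℝ) < k := by exact_mod_cast hk0
  set L : ℝ := 1/(2*k) with hLdef
  have hL0 : 0 < L := by positivity
  have hkL : (k:ℝ) * L = 1/2 := by rw [hLdef]; field_simp
  have hkinv : (2*ρ)⁻¹ ≤ (k:ℝ) := Nat.le_ceil _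
  have hLρ : L ≤ ρ := by
    rw [hLdef]
    rw [div_le_iff₀ (by positivity)]
    calc (1:ℝ) = (2*ρ) * (2*ρ)⁻¹ := by field_simp
    _ ≤ (2*ρ) * k := by gcongr
    _ = ρ * (2*k) := by ring
  have hkub : (k:ℝ) ≤ 1/ρ := by
    have h1 : (k:ℝ) < (2*ρ)⁻¹ + 1 := Nat.ceil_lt_add_one (by positivity)
    have h2 : (2*ρ)⁻¹ + 1 ≤ 1/ρ := by
      rw [div_eq_mul_inv, one_mul]
      have : (2*ρ)⁻¹ = ρ⁻¹/2 := by field_simp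
      rw [this]
      have hρi : (2:ℝ) ≤ ρ⁻¹ := by
        rw [le_inv_comm₀ (by norm_num) hρ0] <;> try skip
        linarith
      linarith
    linarith
  have hLlb : ρ/2 ≤ L := by
    rw [hLdef, le_div_iff₀ (by positivity)]
    calc ρ/2 * (2*k) = ρ * k := by ring
    _ ≤ ρ * (1/ρ) := by gcongr
    _ = 1 := by field_simp
  -- probability measure instances
  haveI hPL : IsProbabilityMeasure (longTailed A B) := longTailed_prob A B hA.ne' (by omega)
  set ν := (longTailed A B).prod ((PMF.bernoulli (Real.toNNReal η) (ENNReal.coe_le_one_iff.mp hη1)).toMeasure) with hν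
  set μm := Measure.pi (fun _ : Fin m => ν) with hμm
  haveI hνP : IsProbabilityMeasure ν := by rw [hν]; infer_instance
  haveI hμmP : IsProbabilityMeasure μm := by rw [hμm]; infer_instance
  -- pieces
  set P : ℕ × ℕ → Set ℝ := fun p => Set.Icc ((p.1:ℝ) + p.2 * L) ((p.1:ℝ) + (p.2 + 1) * L)
    with hP
  set S : Finset (ℕ × ℕ) := Finset.Icc 1 A ×ˢ Finset.range k with hS
  set Bad : ℕ × ℕ → Set (Fin m → ℝ × Bool) := fun p =>
    {ω | ∀ s : Fin m, ¬((ω s).1 ∈ P p ∧ (ω s).2 = true)} with hBad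
  set E := {ω : Fin m → ℝ × Bool |
          ∀ f : ℝ → Bool,
            (∀ i : Fin m, f (ω i).1 = (ω i).2) →
            (1 / 8 : ℝ≥0∞) ≤ longTailed A B {x | ∃ z, dist z x ≤ ρ ∧ f z ≠ false}} with hE
  -- Claim 1 : outside the bad sets, every interpolator has large adversarial risk
  have hgood : ∀ ω, ω ∉ (⋃ p ∈ S, Bad p) → ω ∈ E := by
    intro ω hω
    rw [Set.mem_iUnion₂] at hω
    push_neg at hω
    have hω' : ∀ p ∈ S, ∃ s : Fin m, (ω s).1 ∈ P p ∧ (ω s).2 = true := by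
      intro p hp
      have h := hω p hp
      simp only [hBad, Set.mem_setOf_eq] at h
      push_neg at h
      exact h
    intro f hf
    apply longTailed_head A B hA.ne'
    intro i hi x hx
    obtain ⟨hxil, hxir⟩ := hx
    have hxi : (0:ℝ) ≤ (x - i) / L := div_nonneg (by linarith) hL0.le
    set j : ℕ := ⌊(x - i) / L⌋₊ with hj
    have hjk : j < k := by
      refine (Nat.floor_lt hxi).2 ?_
      rw [div_lt_iff₀ hL0]
      nlinarith [hkL]
    have hfl : (j:ℝ) ≤ (x - i) / L := Nat.floor_le hxi
    have hfl2 : (x - i) / L < j + 1 := Nat.lt_floor_add_one _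
    have hxP : x ∈ P (i, j) := by
      rw [hP]
      have h1 := (mul_le_mul_of_nonneg_right hfl hL0.le)
      rw [div_mul_cancel₀ _ hL0.ne'] at h1
      have h2 := (mul_le_mul_of_nonneg_right hfl2.le hL0.le)
      rw [div_mul_cancel₀ _ hL0.ne'] at h2
      constructor
      · simpa using by nlinarith
      · simpa using by nlinarith
    obtain ⟨t, htP, htt⟩ := hω' (i, j) (Finset.mem_product.2 ⟨hi, Finset.mem_range.2 hjk⟩)
    refine ⟨(ω t).1, ?_, ?_⟩
    · have hd := Real.dist_le_of_mem_Icc (hP ▸ htP) (hP ▸ hxP)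
      have h2 : ((i:ℝ) + ((j:ℝ) + 1) * L) - ((i:ℝ) + (j:ℝ) * L) = L := by ring
      simp only [hP] at hd
      rw [show ((i:ℝ) + ((j:ℝ) + 1) * L) - ((i:ℝ) + (j:ℝ) * L) = L by ring] at hd
      linarith
    · rw [hf t, htt]
      simp
  have hsub : Eᶜ ⊆ ⋃ p ∈ S, Bad p := fun ω hω => by
    by_contra hc
    exact hω (hgood ω hc)
  -- Claim 2 : each bad set has small probability
  have hq0 : 0 < η * L / A := by positivity
  have hbad : ∀ p ∈ S, μm (Bad p) ≤ ENNReal.ofReal (Real.exp (-(m * (η * L / A)))) := by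
    intro p hp
    obtain ⟨hp1, hp2⟩ := Finset.mem_product.1 (hS ▸ hp)
    obtain ⟨hi1, hiA⟩ := Finset.mem_Icc.1 hp1
    have hjk : p.2 < k := Finset.mem_range.1 hp2
    set G : Set (ℝ × Bool) := (P p) ×ˢ ({true} : Set Bool) with hG
    have hGm : MeasurableSet G := by
      rw [hG, hP]
      exact measurableSet_Icc.prod (measurableSet_singleton _)
    have hBadeq : Bad p = Set.pi Set.univ (fun _ : Fin m => Gᶜ) := by
      ext ω
      simp only [hBad, Set.mem_setOf_eq, Set.mem_univ_pi, Set.mem_compl_iff, hG,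
        Set.mem_prod, Set.mem_singleton_iff]
    have hbern : ((PMF.bernoulli (Real.toNNReal η) (ENNReal.coe_le_one_iff.mp hη1)).toMeasure) {true} = ENNReal.ofReal η := by
      rw [PMF.toMeasure_apply_singleton _ _ (measurableSet_singleton _), PMF.bernoulli_apply]
      rfl
    have hsubP : Set.Ioo ((p.1:ℝ) + p.2 * L) ((p.1:ℝ) + (p.2 + 1) * L)
        ⊆ P p ∩ Set.Ioo (p.1:ℝ) ((p.1:ℝ) + 1/2) := by
      intro y hy
      refine ⟨hP ▸ Set.Ioo_subset_Icc_self hy, ?_⟩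
      obtain ⟨hy1, hy2⟩ := hy
      constructor
      · nlinarith [hL0, (Nat.cast_nonneg p.2 : (0:ℝ) ≤ p.2)]
      · have hjk' : (p.2:ℝ) + 1 ≤ k := by exact_mod_cast hjk
        nlinarith [hkL]
    have hlowP : (2 * (A:ℝ≥0∞))⁻¹ * ENNReal.ofReal (2 * L) ≤ longTailed A B (P p) := by
      rw [longTailed, Measure.add_apply]
      refine le_trans ?_ le_self_add
      rw [Measure.smul_apply, Measure.finset_sum_apply, smul_eq_mul]
      refine mul_le_mul_right ?_ _
      calc ENNReal.ofReal (2 * L)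
          ≤ unifIoo (p.1:ℝ) ((p.1:ℝ) + 1/2) (P p) := by
            rw [unifIoo_apply]
            have hv : ENNReal.ofReal L ≤ volume (P p ∩ Set.Ioo (p.1:ℝ) ((p.1:ℝ) + 1/2)) := by
              calc ENNReal.ofReal L
                  = volume (Set.Ioo ((p.1:ℝ) + p.2 * L) ((p.1:ℝ) + (p.2 + 1) * L)) := by
                    rw [Real.volume_Ioo]
                    congr 1
                    ring
              _ ≤ _ := measure_mono hsubP
            have h12 : (ENNReal.ofReal ((p.1:ℝ) + 1/2 - p.1))⁻¹ = ENNReal.ofReal 2 := by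
              rw [show (p.1:ℝ) + 1/2 - p.1 = 1/2 by ring,
                ← ENNReal.ofReal_inv_of_pos (by norm_num)]
              norm_num
            rw [h12]
            calc ENNReal.ofReal (2 * L) = ENNReal.ofReal 2 * ENNReal.ofReal L := by
                  rw [← ENNReal.ofReal_mul (by norm_num)]
            _ ≤ ENNReal.ofReal 2 * volume (P p ∩ Set.Ioo (p.1:ℝ) ((p.1:ℝ) + 1/2)) :=
                  mul_le_mul_right hv _
      _ ≤ ∑ i ∈ Finset.Icc 1 A, unifIoo (i:ℝ) ((i:ℝ) + 1/2) (P p) :=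
            Finset.single_le_sum (f := fun i : ℕ => unifIoo (i:ℝ) ((i:ℝ) + 1/2) (P p))
              (fun i _ => zero_le) hp1
    have hcast : (2 * (A:ℝ≥0∞)) = ENNReal.ofReal (2 * (A:ℝ)) := by
      rw [ENNReal.ofReal_mul (by norm_num), ENNReal.ofReal_natCast, ENNReal.ofReal_ofNat]
    have hνG : ENNReal.ofReal (η * L / A) ≤ ν G := by
      rw [hν, hG, Measure.prod_prod, hbern]
      calc ENNReal.ofReal (η * L / A)
          = (2 * (A:ℝ≥0∞))⁻¹ * ENNReal.ofReal (2 * L) * ENNReal.ofReal η := by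
            rw [hcast, ← ENNReal.ofReal_inv_of_pos (by positivity),
              ← ENNReal.ofReal_mul (by positivity), ← ENNReal.ofReal_mul (by positivity)]
            congr 1
            field_simp
      _ ≤ longTailed A B (P p) * ENNReal.ofReal η := mul_le_mul_left hlowP _
    have hνGc : ν Gᶜ ≤ ENNReal.ofReal (Real.exp (-(η * L / A))) := by
      rw [measure_compl hGm (measure_ne_top _ _), measure_univ]
      calc 1 - ν G ≤ 1 - ENNReal.ofReal (η * L / A) := tsub_le_tsub_left hνG 1
      _ = ENNReal.ofReal (1 - η * L / A) := by
            rw [ENNReal.ofReal_sub _ (by positivity), ENNReal.ofReal_one]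
      _ ≤ ENNReal.ofReal (Real.exp (-(η * L / A))) :=
            ENNReal.ofReal_le_ofReal (by linarith [Real.add_one_le_exp (-(η * L / A))])
    rw [hBadeq, hμm, Measure.pi_pi]
    calc ∏ _s : Fin m, ν Gᶜ = ν Gᶜ ^ m := by
          rw [Finset.prod_const, Finset.card_univ, Fintype.card_fin]
    _ ≤ ENNReal.ofReal (Real.exp (-(η * L / A))) ^ m := pow_le_pow_left' hνGc m
    _ = ENNReal.ofReal (Real.exp (-(η * L / A)) ^ m) :=
          (ENNReal.ofReal_pow (Real.exp_nonneg _) m).symm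
    _ = ENNReal.ofReal (Real.exp (-(m * (η * L / A)))) := by
          rw [← Real.exp_nat_mul]
          congr 1
          ring
  -- Claim 3 : conclude
  have hEc : μm Eᶜ ≤ ENNReal.ofReal δ := by
    calc μm Eᶜ ≤ μm (⋃ p ∈ S, Bad p) := measure_mono hsub
    _ ≤ ∑ p ∈ S, μm (Bad p) := measure_biUnion_finset_le S Bad
    _ ≤ ∑ _p ∈ S, ENNReal.ofReal (Real.exp (-(m * (η * L / A)))) := Finset.sum_le_sum hbad
    _ = (A * k : ℕ) * ENNReal.ofReal (Real.exp (-(m * (η * L / A)))) := by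
        rw [Finset.sum_const, hS, Finset.card_product, Nat.card_Icc, Finset.card_range,
          Nat.add_sub_cancel, nsmul_eq_mul]
    _ ≤ ENNReal.ofReal δ := by
        rw [← ENNReal.ofReal_natCast, ← ENNReal.ofReal_mul (by positivity)]
        apply ENNReal.ofReal_le_ofReal
        push_cast
        exact numeric_bound A k m ρ δ η L (by exact_mod_cast hA) hρ0 hρ2 hδ0 hδ2 hη0 hL0
          hLlb hkub hm
  calc 1 - ENNReal.ofReal δ ≤ 1 - μm Eᶜ := tsub_le_tsub_left hEc 1
  _ ≤ μm E := by
    rw [tsub_le_iff_right]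
    calc (1:ℝ≥0∞) = μm (E ∪ Eᶜ) := by rw [Set.union_compl_self, measure_univ]
    _ ≤ μm E + μm Eᶜ := measure_union_le _ _
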